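/- Let B = {f_1, ..., f_n} ⊆ ℤ[t]^m be sorted by degree with linearly independent pilot vectors, and suppose vectors of different degrees are pairwise asymptotically orthogonal (their pilot vectors have zero inner product). If i < j and deg(f_i) < deg(f_j), then the Gram–Schmidt coefficient ρ_{j,i} ∈ ℚ(t) (computed over ℚ(t)) has degree strictly less than deg(f_j) - deg(f_i). -/

import Mathlib

open Polynomial Filter

noncomputable def dotF {F : Type*} [CommRing F] {m : ℕ} (u v : Fin m → F) : F :=
  ∑ k, u k * v k

noncomputable def gs {F : Type*} [Field F] {m : ℕ} (f : ℕ → (Fin m → F)) : ℕ → (Fin m → F)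
  | i => f i - ∑ j : Fin i,
      (dotF (f i) (gs f j) / dotF (gs f j) (gs f j)) • gs f j
  termination_by i => i
  decreasing_by exact j.2

noncomputable def gsCoeff {F : Type*} [Field F] {m : ℕ} (f : ℕ → (Fin m → F)) (i j : ℕ) : F :=
  dotF (f i) (gs f j) / dotF (gs f j) (gs f j)

/-- The degree of a vector of polynomials: max of the coordinate degrees (`natDegree`). -/
noncomputable def degVec {m : ℕ} {R : Type*} [Semiring R] (f : Fin m → Polynomial R) : ℕ :=
  Finset.univ.sup fun k => (f k).natDegree

/-- The pilot vector: the vector of coefficients in degree `degVec f`. -/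
noncomputable def pilot {m : ℕ} {R : Type*} [Semiring R] (f : Fin m → Polynomial R) : Fin m → R :=
  fun k => (f k).coeff (degVec f)

/-- View a vector of integer polynomials inside ℚ(t)^m. -/
noncomputable def toRF {m : ℕ} (f : Fin m → Polynomial ℤ) : Fin m → RatFunc ℚ :=
  fun k => algebraMap (Polynomial ℚ) (RatFunc ℚ) ((f k).map (Int.castRingHom ℚ))

/-- Evaluation of a rational function at a real number (junk at poles). -/
noncomputable def evalR (r : RatFunc ℚ) (t : ℝ) : ℝ :=
  RatFunc.eval (algebraMap ℚ ℝ) t r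

namespace GSAux
open Finset

variable {m : ℕ}

/-- The ℚ-polynomial version of `f l`. -/
noncomputable def fQ (f : ℕ → Fin m → Polynomial ℤ) (l : ℕ) : Fin m → Polynomial ℚ :=
  fun k => (f l k).map (Int.castRingHom ℚ)

/-- The ℚ-valued pilot vector. -/
noncomputable def plQ (f : ℕ → Fin m → Polynomial ℤ) (l : ℕ) : Fin m → ℚ :=
  fun k => ((pilot (f l) k : ℤ) : ℚ)

lemma fQ_natDegree_eq (f : ℕ → Fin m → Polynomial ℤ) (l : ℕ) (k : Fin m) :
    (fQ f l k).natDegree = (f l k).natDegree :=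
  natDegree_map_eq_of_injective Int.cast_injective _

lemma fQ_natDegree_le (f : ℕ → Fin m → Polynomial ℤ) (l : ℕ) (k : Fin m) :
    (fQ f l k).natDegree ≤ degVec (f l) := by
  rw [fQ_natDegree_eq]
  exact Finset.le_sup (f := fun k => (f l k).natDegree) (Finset.mem_univ k)

lemma fQ_coeff_top (f : ℕ → Fin m → Polynomial ℤ) (l : ℕ) (k : Fin m) :
    (fQ f l k).coeff (degVec (f l)) = plQ f l k := by
  simp [fQ, plQ, pilot, coeff_map]

lemma toRF_eq (f : ℕ → Fin m → Polynomial ℤ) (l : ℕ) (k : Fin m) :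
    toRF (f l) k = algebraMap (Polynomial ℚ) (RatFunc ℚ) (fQ f l k) := rfl

/-- The inductive invariant: `gs` in step `l` equals the vector of polynomials `P`
divided by `D`, with controlled degrees and top coefficients a combination of pilots. -/
def Props (f : ℕ → Fin m → Polynomial ℤ) (l : ℕ) (P : Fin m → Polynomial ℚ)
    (D : Polynomial ℚ) (a : ℕ → ℚ) : Prop :=
  D ≠ 0 ∧
  (∀ k, gs (fun l' => toRF (f l')) l k
      = algebraMap (Polynomial ℚ) (RatFunc ℚ) (P k) / algebraMap _ _ D) ∧
  (∀ k, (P k).natDegree ≤ D.natDegree + degVec (f l)) ∧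
  (∀ k, (P k).coeff (D.natDegree + degVec (f l)) = ∑ s ∈ Finset.range (l+1), a s * plQ f s k) ∧
  a l = D.leadingCoeff

lemma intDegree_div_polys (A B : Polynomial ℚ) (hA : A ≠ 0) (hB : B ≠ 0) :
    (algebraMap (Polynomial ℚ) (RatFunc ℚ) A / algebraMap _ _ B).intDegree
      = (A.natDegree : ℤ) - B.natDegree := by
  have hB' := RatFunc.algebraMap_ne_zero (K := ℚ) hB
  have hx : algebraMap (Polynomial ℚ) (RatFunc ℚ) A / algebraMap _ _ B ≠ 0 :=
    div_ne_zero (RatFunc.algebraMap_ne_zero hA) hB'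
  have h := RatFunc.intDegree_mul hx hB'
  rw [div_mul_cancel₀ _ hB', RatFunc.intDegree_polynomial, RatFunc.intDegree_polynomial] at h
  omega

/-- dot product of `toRF (f j')` with a fraction-represented vector. -/
lemma dot_toRF (f : ℕ → Fin m → Polynomial ℤ) (j' : ℕ) (g : Fin m → RatFunc ℚ)
    (P : Fin m → Polynomial ℚ) (D : Polynomial ℚ)
    (hrep : ∀ k, g k = algebraMap (Polynomial ℚ) (RatFunc ℚ) (P k) / algebraMap _ _ D) :
    dotF (toRF (f j')) g
      = algebraMap (Polynomial ℚ) (RatFunc ℚ) (∑ k, fQ f j' k * P k) / algebraMap _ _ D := by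
  unfold dotF
  rw [map_sum, Finset.sum_div]
  refine Finset.sum_congr rfl fun k _ => ?_
  rw [toRF_eq, hrep, map_mul, mul_div_assoc]

/-- dot product of a fraction-represented vector with itself. -/
lemma dot_self (g : Fin m → RatFunc ℚ) (P : Fin m → Polynomial ℚ) (D : Polynomial ℚ)
    (hrep : ∀ k, g k = algebraMap (Polynomial ℚ) (RatFunc ℚ) (P k) / algebraMap _ _ D) :
    dotF g g = algebraMap (Polynomial ℚ) (RatFunc ℚ) (∑ k, P k * P k)
        / (algebraMap (Polynomial ℚ) (RatFunc ℚ) D) ^ 2 := by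
  unfold dotF
  rw [map_sum, Finset.sum_div]
  refine Finset.sum_congr rfl fun k _ => ?_
  rw [hrep, map_mul, div_mul_div_comm, sq]


/-- Pilot linear independence: a vanishing combination of the first pilots has zero coeffs. -/
lemma pilot_comb_zero {n : ℕ} (f : ℕ → Fin m → Polynomial ℤ)
    (hpli : LinearIndependent ℚ (fun i : Fin n => fun k => ((pilot (f i) k : ℤ) : ℚ)))
    (l : ℕ) (hln : l < n) (a : ℕ → ℚ)
    (hz : ∀ k, ∑ s ∈ Finset.range (l+1), a s * plQ f s k = 0) :
    ∀ s, s ≤ l → a s = 0 := by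
  intro s hs
  set b : Fin n → ℚ := fun s => if (s : ℕ) ≤ l then a s else 0 with hb
  have hsum : ∑ t : Fin n, b t • (fun k => ((pilot (f t) k : ℤ) : ℚ)) = 0 := by
    funext k
    have h1 : (∑ t : Fin n, b t • (fun k => ((pilot (f t) k : ℤ) : ℚ))) k
        = ∑ t ∈ Finset.range n, (if t ≤ l then a t else 0) * plQ f t k := by
      rw [Finset.sum_apply]
      exact Fin.sum_univ_eq_sum_range (fun t => (if t ≤ l then a t else 0) * plQ f t k) n
    rw [h1]
    have h3 : ∑ t ∈ Finset.range n, (if t ≤ l then a t else 0) * plQ f t k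
        = ∑ t ∈ Finset.range (l+1), (if t ≤ l then a t else 0) * plQ f t k := by
      refine (Finset.sum_subset (Finset.range_subset_range.mpr (by omega)) ?_).symm
      intro x _ hx
      rw [Finset.mem_range] at hx
      rw [if_neg (by omega)]
      ring
    rw [h3]
    have h4 : ∑ t ∈ Finset.range (l+1), (if t ≤ l then a t else 0) * plQ f t k
        = ∑ t ∈ Finset.range (l+1), a t * plQ f t k := by
      refine Finset.sum_congr rfl fun x hx => ?_
      rw [Finset.mem_range] at hx
      rw [if_pos (by omega)]
    rw [h4]
    simpa using hz k
  have := (Fintype.linearIndependent_iff.mp hpli) b hsum ⟨s, lt_of_le_of_lt hs hln⟩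
  simpa [hb, hs] using this

/-- The key positivity: the top coefficient of `∑ P k * P k` is nonzero. -/
lemma Q_facts {n : ℕ} (f : ℕ → Fin m → Polynomial ℤ)
    (hpli : LinearIndependent ℚ (fun i : Fin n => fun k => ((pilot (f i) k : ℤ) : ℚ)))
    (l : ℕ) (hln : l < n) (P : Fin m → Polynomial ℚ) (D : Polynomial ℚ) (a : ℕ → ℚ)
    (h : Props f l P D a) :
    (∑ k, P k * P k).natDegree = (D.natDegree + degVec (f l)) + (D.natDegree + degVec (f l)) ∧
    (∑ k, P k * P k) ≠ 0 := by
  obtain ⟨hD, hrep, hdeg, hcoef, hal⟩ := h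
  set e := D.natDegree + degVec (f l) with he
  have hcoe : (∑ k, P k * P k).coeff (e + e) = ∑ k : Fin m, (P k).coeff e * (P k).coeff e := by
    rw [finset_sum_coeff]
    exact Finset.sum_congr rfl fun k _ =>
      coeff_mul_add_eq_of_natDegree_le (hdeg k) (hdeg k)
  have hwne : ∃ k, (P k).coeff e ≠ 0 := by
    by_contra hcon
    push_neg at hcon
    have hz : ∀ k, ∑ s ∈ Finset.range (l+1), a s * plQ f s k = 0 := by
      intro k; rw [← hcoef k]; exact hcon k
    have := pilot_comb_zero f hpli l hln a hz l le_rfl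
    rw [hal] at this
    exact hD (leadingCoeff_eq_zero.mp this)
  have hpos : 0 < ∑ k : Fin m, (P k).coeff e * (P k).coeff e := by
    obtain ⟨k0, hk0⟩ := hwne
    exact Finset.sum_pos' (fun k _ => mul_self_nonneg _)
      ⟨k0, Finset.mem_univ k0, mul_self_pos.mpr hk0⟩
  have hne : (∑ k, P k * P k).coeff (e + e) ≠ 0 := by rw [hcoe]; exact ne_of_gt hpos
  have hle : (∑ k, P k * P k).natDegree ≤ e + e :=
    natDegree_sum_le_of_forall_le _ _ fun k _ =>
      natDegree_mul_le.trans (add_le_add (hdeg k) (hdeg k))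
  refine ⟨le_antisymm hle (le_natDegree_of_ne_zero hne), fun h0 => hne (by simp [h0])⟩


lemma claim_all {n : ℕ} (f : ℕ → Fin m → Polynomial ℤ)
    (hpli : LinearIndependent ℚ (fun i : Fin n => fun k => ((pilot (f i) k : ℤ) : ℚ))) :
    ∀ i, i ≤ n → ∃ (P : ℕ → Fin m → Polynomial ℚ) (D : ℕ → Polynomial ℚ) (a : ℕ → ℕ → ℚ),
      ∀ l, l < i → Props f l (P l) (D l) (a l) := by
  intro i
  induction i with
  | zero =>
    exact fun _ => ⟨fun _ _ => 0, fun _ => 1, fun _ _ => 0, fun l hl => absurd hl (by omega)⟩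
  | succ i IH =>
    intro hin
    obtain ⟨P, D, a, hPDA⟩ := IH (by omega)
    have hD : ∀ l, l < i → D l ≠ 0 := fun l hl => (hPDA l hl).1
    have hrep : ∀ l, l < i → ∀ k, gs (fun l' => toRF (f l')) l k
        = algebraMap (Polynomial ℚ) (RatFunc ℚ) (P l k) / algebraMap _ _ (D l) :=
      fun l hl => (hPDA l hl).2.1
    have hdegP : ∀ l, l < i → ∀ k, (P l k).natDegree ≤ (D l).natDegree + degVec (f l) :=
      fun l hl => (hPDA l hl).2.2.1
    have hcoefP : ∀ l, l < i → ∀ k, (P l k).coeff ((D l).natDegree + degVec (f l))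
        = ∑ s ∈ Finset.range (l+1), a l s * plQ f s k := fun l hl => (hPDA l hl).2.2.2.1
    have hQf : ∀ l, l < i →
        ((∑ k, P l k * P l k).natDegree
          = ((D l).natDegree + degVec (f l)) + ((D l).natDegree + degVec (f l)) ∧
        (∑ k, P l k * P l k) ≠ 0) :=
      fun l hl => Q_facts f hpli l (by omega) (P l) (D l) (a l) (hPDA l hl)
    set Q : ℕ → Polynomial ℚ := fun l => ∑ k, P l k * P l k with hQdef
    set N : ℕ → Polynomial ℚ := fun l => ∑ k, fQ f i k * P l k with hNdef
    set Di : Polynomial ℚ := ∏ l ∈ Finset.range i, Q l with hDidef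
    set R : ℕ → Polynomial ℚ := fun l => ∏ l' ∈ (Finset.range i).erase l, Q l' with hRdef
    set β : ℕ → ℚ := fun l =>
      (N l).coeff (degVec (f i) + ((D l).natDegree + degVec (f l))) * (R l).leadingCoeff
      with hβdef
    set PP : Fin m → Polynomial ℚ :=
      fun k => Di * fQ f i k - ∑ l ∈ Finset.range i, N l * R l * P l k with hPPdef
    set aa : ℕ → ℚ := fun s => (if s = i then Di.leadingCoeff else 0)
      - ∑ l ∈ Finset.range i, β l * (if s < l + 1 then a l s else 0) with haadef
    have hQne : ∀ l, l < i → Q l ≠ 0 := fun l hl => (hQf l hl).2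
    have hQdeg : ∀ l, l < i → (Q l).natDegree
        = ((D l).natDegree + degVec (f l)) + ((D l).natDegree + degVec (f l)) :=
      fun l hl => (hQf l hl).1
    have hDine : Di ≠ 0 :=
      Finset.prod_ne_zero_iff.mpr fun l hl => hQne l (Finset.mem_range.mp hl)
    have hRne : ∀ l, l < i → R l ≠ 0 := fun l _ =>
      Finset.prod_ne_zero_iff.mpr fun l' hl' =>
        hQne l' (Finset.mem_range.mp (Finset.mem_of_mem_erase hl'))
    have hsplit : ∀ l, l < i → Di = Q l * R l :=
      fun l hl => (Finset.mul_prod_erase _ _ (Finset.mem_range.mpr hl)).symm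
    have hDideg : ∀ l, l < i → Di.natDegree = (Q l).natDegree + (R l).natDegree := by
      intro l hl
      rw [hsplit l hl]
      exact natDegree_mul (hQne l hl) (hRne l hl)
    have hNdeg : ∀ l, l < i →
        (N l).natDegree ≤ degVec (f i) + ((D l).natDegree + degVec (f l)) := fun l hl =>
      natDegree_sum_le_of_forall_le _ _ fun k _ =>
        natDegree_mul_le.trans (add_le_add (fQ_natDegree_le f i k) (hdegP l hl k))
    -- the representation of `gs i`
    have hrepI : ∀ k, gs (fun l' => toRF (f l')) i k
        = algebraMap (Polynomial ℚ) (RatFunc ℚ) (PP k) / algebraMap _ _ Di := by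
      intro k
      rw [gs]
      simp only [Pi.sub_apply, Finset.sum_apply, Pi.smul_apply, smul_eq_mul]
      have hterm : ∀ j : Fin i,
          dotF (toRF (f i)) (gs (fun l' => toRF (f l')) ↑j) /
            dotF (gs (fun l' => toRF (f l')) ↑j) (gs (fun l' => toRF (f l')) ↑j) *
            gs (fun l' => toRF (f l')) ↑j k
          = algebraMap (Polynomial ℚ) (RatFunc ℚ) (N ↑j * R ↑j * P ↑j k)
              / algebraMap _ _ Di := by
        intro j
        have hl : (j : ℕ) < i := j.2
        have e1 : dotF (toRF (f i)) (gs (fun l' => toRF (f l')) ↑j)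
            = algebraMap (Polynomial ℚ) (RatFunc ℚ) (N ↑j) / algebraMap _ _ (D ↑j) :=
          dot_toRF f i _ (P ↑j) (D ↑j) (hrep ↑j hl)
        have e2 : dotF (gs (fun l' => toRF (f l')) ↑j) (gs (fun l' => toRF (f l')) ↑j)
            = algebraMap (Polynomial ℚ) (RatFunc ℚ) (Q ↑j)
              / (algebraMap (Polynomial ℚ) (RatFunc ℚ) (D ↑j)) ^ 2 :=
          dot_self _ (P ↑j) (D ↑j) (hrep ↑j hl)
        have hsp : algebraMap (Polynomial ℚ) (RatFunc ℚ) Di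
            = algebraMap (Polynomial ℚ) (RatFunc ℚ) (Q ↑j)
              * algebraMap (Polynomial ℚ) (RatFunc ℚ) (R ↑j) := by
          rw [← map_mul, ← hsplit ↑j hl]
        have h1 : algebraMap (Polynomial ℚ) (RatFunc ℚ) (D ↑j) ≠ 0 :=
          RatFunc.algebraMap_ne_zero (hD ↑j hl)
        have h2 : algebraMap (Polynomial ℚ) (RatFunc ℚ) (Q ↑j) ≠ 0 :=
          RatFunc.algebraMap_ne_zero (hQne ↑j hl)
        have h3 : algebraMap (Polynomial ℚ) (RatFunc ℚ) (R ↑j) ≠ 0 :=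
          RatFunc.algebraMap_ne_zero (hRne ↑j hl)
        rw [e1, e2, hrep ↑j hl k, hsp]
        simp only [map_mul]
        field_simp
      rw [Finset.sum_congr rfl fun j _ => hterm j]
      rw [Fin.sum_univ_eq_sum_range (fun l =>
        algebraMap (Polynomial ℚ) (RatFunc ℚ) (N l * R l * P l k) / algebraMap _ _ Di) i]
      rw [← Finset.sum_div, ← map_sum, toRF_eq, hPPdef, map_sub, map_mul, sub_div,
        mul_div_cancel_left₀ _ (RatFunc.algebraMap_ne_zero hDine)]
    -- the degree bound
    have hdegPP : ∀ k, (PP k).natDegree ≤ Di.natDegree + degVec (f i) := by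
      intro k
      refine (natDegree_sub_le _ _).trans (max_le ?_ ?_)
      · exact natDegree_mul_le.trans (add_le_add le_rfl (fQ_natDegree_le f i k))
      · refine natDegree_sum_le_of_forall_le _ _ fun l hl => ?_
        rw [Finset.mem_range] at hl
        have h1 := hNdeg l hl
        have h2 := hdegP l hl k
        have h3 := hDideg l hl
        have h4 := hQdeg l hl
        have h5 : (N l * R l * P l k).natDegree
            ≤ (N l).natDegree + (R l).natDegree + (P l k).natDegree :=
          natDegree_mul_le.trans (add_le_add natDegree_mul_le le_rfl)
        omega
    -- the top coefficient of each summand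
    have hw : ∀ l, l < i → ∀ k, (N l * R l * P l k).coeff (Di.natDegree + degVec (f i))
        = β l * (P l k).coeff ((D l).natDegree + degVec (f l)) := by
      intro l hl k
      have hsum : Di.natDegree + degVec (f i)
          = ((degVec (f i) + ((D l).natDegree + degVec (f l))) + (R l).natDegree)
            + ((D l).natDegree + degVec (f l)) := by
        have h3 := hDideg l hl
        have h4 := hQdeg l hl
        omega
      rw [hsum,
        coeff_mul_add_eq_of_natDegree_le
          (natDegree_mul_le.trans (add_le_add (hNdeg l hl) le_rfl)) (hdegP l hl k),
        coeff_mul_add_eq_of_natDegree_le (hNdeg l hl) le_rfl, coeff_natDegree]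
    -- the top coefficient of PP
    have hcoefPP : ∀ k, (PP k).coeff (Di.natDegree + degVec (f i))
        = ∑ s ∈ Finset.range (i+1), aa s * plQ f s k := by
      intro k
      have hlhs : (PP k).coeff (Di.natDegree + degVec (f i))
          = Di.leadingCoeff * plQ f i k
            - ∑ l ∈ Finset.range i, β l * ∑ s ∈ Finset.range (l+1), a l s * plQ f s k := by
        rw [hPPdef]
        rw [coeff_sub, finset_sum_coeff]
        congr 1
        · rw [coeff_mul_add_eq_of_natDegree_le le_rfl (fQ_natDegree_le f i k), coeff_natDegree,
            fQ_coeff_top]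
        · refine Finset.sum_congr rfl fun l hl => ?_
          rw [Finset.mem_range] at hl
          rw [hw l hl k, hcoefP l hl k]
      rw [hlhs]
      have hstep : ∀ s, aa s * plQ f s k = (if s = i then Di.leadingCoeff * plQ f s k else 0)
          - ∑ l ∈ Finset.range i, (if s < l + 1 then β l * (a l s * plQ f s k) else 0) := by
        intro s
        rw [haadef]
        rw [sub_mul, Finset.sum_mul]
        congr 1
        · split <;> simp
        · refine Finset.sum_congr rfl fun l _ => ?_
          split <;> ring_nf
      rw [Finset.sum_congr rfl fun s _ => hstep s, Finset.sum_sub_distrib]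
      have hfst : ∑ s ∈ Finset.range (i+1), (if s = i then Di.leadingCoeff * plQ f s k else 0)
          = Di.leadingCoeff * plQ f i k := by
        rw [Finset.sum_ite_eq' (Finset.range (i+1)) i (fun s => Di.leadingCoeff * plQ f s k)]
        rw [if_pos (Finset.mem_range.mpr (by omega))]
      have hsnd : ∑ s ∈ Finset.range (i+1),
            ∑ l ∈ Finset.range i, (if s < l + 1 then β l * (a l s * plQ f s k) else 0)
          = ∑ l ∈ Finset.range i, β l * ∑ s ∈ Finset.range (l+1), a l s * plQ f s k := by
        rw [Finset.sum_comm]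
        refine Finset.sum_congr rfl fun l hl => ?_
        rw [Finset.mem_range] at hl
        rw [Finset.mul_sum]
        rw [← Finset.sum_subset (Finset.range_subset_range.mpr (by omega : l + 1 ≤ i + 1))
          (fun x _ hx => by rw [Finset.mem_range] at hx; exact if_neg (by omega))]
        exact Finset.sum_congr rfl fun s hs => if_pos (Finset.mem_range.mp hs)
      rw [hfst, hsnd]
    have haai : aa i = Di.leadingCoeff := by
      have hz : ∀ l ∈ Finset.range i, β l * (if i < l + 1 then a l i else 0) = 0 := by
        intro l hl
        rw [Finset.mem_range] at hl
        rw [if_neg (by omega)]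
        ring
      rw [haadef]
      simp only
      rw [Finset.sum_congr rfl hz, Finset.sum_const_zero, sub_zero]
      simp
    refine ⟨Function.update P i PP, Function.update D i Di, Function.update a i aa, ?_⟩
    intro l hl
    rcases Nat.lt_succ_iff_lt_or_eq.mp hl with h | h
    · rw [Function.update_of_ne (by omega), Function.update_of_ne (by omega),
        Function.update_of_ne (by omega)]
      exact hPDA l h
    · subst h
      rw [Function.update_self, Function.update_self, Function.update_self]
      exact ⟨hDine, hrepI, hdegPP, hcoefPP, haai⟩

end GSAux

/-- in a degree-sorted basis with linearly independent pilot vectors and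
asymptotic orthogonality between vectors of different degree, the Gram–Schmidt coefficient
ρ_{j,i} has degree strictly less than deg(f_j) - deg(f_i) whenever deg(f_i) < deg(f_j). -/


theorem gs_coeff_degree_lt {m n : ℕ} (f : ℕ → Fin m → Polynomial ℤ)
    (hnz : ∀ i < n, f i ≠ 0)
    (hli : LinearIndependent (RatFunc ℚ) (fun l : Fin n => toRF (f l)))
    (hsorted : ∀ i j, i ≤ j → j < n → degVec (f i) ≤ degVec (f j))
    (hpli : LinearIndependent ℚ (fun i : Fin n => fun k => ((pilot (f i) k : ℤ) : ℚ)))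
    (horth : ∀ i < n, ∀ j < n, degVec (f i) ≠ degVec (f j) →
      ∑ k, pilot (f i) k * pilot (f j) k = 0) :
    ∀ i j, i < j → j < n → degVec (f i) < degVec (f j) →
      (gsCoeff (fun l => toRF (f l)) j i).intDegree <
        (degVec (f j) : ℤ) - (degVec (f i) : ℤ) := by
  intro i j hij hjn hdij
  have hin : i < n := hij.trans hjn
  obtain ⟨P, D, a, hPDA⟩ := GSAux.claim_all f hpli n le_rfl
  obtain ⟨hD, hrep, hdeg, hcoef, hal⟩ := hPDA i hin
  obtain ⟨hQdeg, hQne⟩ := GSAux.Q_facts f hpli i hin (P i) (D i) (a i) (hPDA i hin)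
  set N : Polynomial ℚ := ∑ k, GSAux.fQ f j k * P i k with hN
  have hdotN : dotF (toRF (f j)) (gs (fun l => toRF (f l)) i)
      = algebraMap (Polynomial ℚ) (RatFunc ℚ) N / algebraMap _ _ (D i) :=
    GSAux.dot_toRF f j _ (P i) (D i) hrep
  have hdotG : dotF (gs (fun l => toRF (f l)) i) (gs (fun l => toRF (f l)) i)
      = algebraMap (Polynomial ℚ) (RatFunc ℚ) (∑ k, P i k * P i k)
        / (algebraMap (Polynomial ℚ) (RatFunc ℚ) (D i)) ^ 2 :=
    GSAux.dot_self _ (P i) (D i) hrep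
  have hNdeg : N.natDegree ≤ degVec (f j) + ((D i).natDegree + degVec (f i)) :=
    natDegree_sum_le_of_forall_le _ _ fun k _ =>
      natDegree_mul_le.trans (add_le_add (GSAux.fQ_natDegree_le f j k) (hdeg k))
  have hNcoeff : N.coeff (degVec (f j) + ((D i).natDegree + degVec (f i))) = 0 := by
    rw [hN, finset_sum_coeff]
    have hterm : ∀ k : Fin m,
        (GSAux.fQ f j k * P i k).coeff (degVec (f j) + ((D i).natDegree + degVec (f i)))
        = GSAux.plQ f j k * ∑ s ∈ Finset.range (i+1), a i s * GSAux.plQ f s k := fun k => by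
      rw [coeff_mul_add_eq_of_natDegree_le (GSAux.fQ_natDegree_le f j k) (hdeg k),
        GSAux.fQ_coeff_top, hcoef k]
    rw [Finset.sum_congr rfl fun k _ => hterm k]
    simp_rw [Finset.mul_sum]
    rw [Finset.sum_comm]
    refine Finset.sum_eq_zero fun s hs => ?_
    rw [Finset.mem_range] at hs
    have hsn : s < n := by omega
    have hne : degVec (f j) ≠ degVec (f s) := by
      have h1 : degVec (f s) ≤ degVec (f i) := hsorted s i (by omega) hin
      omega
    have horthZ := horth j hjn s hsn hne
    have horthQ : ∑ k : Fin m, GSAux.plQ f j k * GSAux.plQ f s k = 0 := by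
      unfold GSAux.plQ
      exact_mod_cast congrArg (Int.cast : ℤ → ℚ) horthZ
    calc ∑ k : Fin m, GSAux.plQ f j k * (a i s * GSAux.plQ f s k)
        = a i s * ∑ k : Fin m, GSAux.plQ f j k * GSAux.plQ f s k := by
          rw [Finset.mul_sum]
          exact Finset.sum_congr rfl fun k _ => by ring
      _ = 0 := by rw [horthQ, mul_zero]
  have hcoD : algebraMap (Polynomial ℚ) (RatFunc ℚ) (D i) ≠ 0 :=
    RatFunc.algebraMap_ne_zero hD
  have hcoQ : algebraMap (Polynomial ℚ) (RatFunc ℚ) (∑ k, P i k * P i k) ≠ 0 :=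
    RatFunc.algebraMap_ne_zero hQne
  have hrho : gsCoeff (fun l => toRF (f l)) j i
      = algebraMap (Polynomial ℚ) (RatFunc ℚ) (N * D i)
        / algebraMap _ _ (∑ k, P i k * P i k) := by
    have key : ∀ A B C : RatFunc ℚ, B ≠ 0 → C ≠ 0 → A / B / (C / B ^ 2) = A * B / C := by
      intro A B C hB hC
      field_simp
    unfold gsCoeff
    rw [hdotN, hdotG, map_mul, key _ _ _ hcoD hcoQ]
  by_cases hN0 : N = 0
  · rw [hrho, hN0]
    simp only [zero_mul, map_zero, zero_div]
    rw [RatFunc.intDegree_zero]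
    have := hdij
    omega
  · have hNlt : N.natDegree < degVec (f j) + ((D i).natDegree + degVec (f i)) := by
      refine lt_of_le_of_ne hNdeg fun he => hN0 ?_
      rw [← he] at hNcoeff
      exact leadingCoeff_eq_zero.mp hNcoeff
    rw [hrho, GSAux.intDegree_div_polys _ _ (mul_ne_zero hN0 hD) hQne,
      natDegree_mul hN0 hD, hQdeg]
    push_cast
    omega
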